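/- Let S ∈ O(4) be the swap (x,y) ↦ (y,x) on ℝ² × ℝ². An orthogonal matrix M ∈ O(4) maps T₀ onto T₀ if and only if M is of the form [[P,0],[0,Q]] with P, Q ∈ O(2) (block diagonal), or of the form S·[[P,0],[0,Q]] with P, Q ∈ O(2). In particular, every block-diagonal matrix [[P,0],[0,Q]] with P, Q ∈ O(2) stabilizes T₀. -/

import Mathlib

open Matrix

/-- The standard Clifford torus `T₀ ⊂ S³ ⊂ ℝ⁴ = ℝ² × ℝ²`. -/
def CliffordT0 : Set (Fin 4 → ℝ) :=
  {v | v 0 ^ 2 + v 1 ^ 2 = 1 / 2 ∧ v 2 ^ 2 + v 3 ^ 2 = 1 / 2}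

/-- The block diagonal matrix `[[P,0],[0,Q]]` built from two `2 × 2` matrices. -/
def blockDiag2 (P Q : Matrix (Fin 2) (Fin 2) ℝ) : Matrix (Fin 4) (Fin 4) ℝ :=
  !![P 0 0, P 0 1, 0, 0;
     P 1 0, P 1 1, 0, 0;
     0, 0, Q 0 0, Q 0 1;
     0, 0, Q 1 0, Q 1 1]

/-- The swap `(x, y) ↦ (y, x)` on `ℝ² × ℝ²`. -/
def swapMat : Matrix (Fin 4) (Fin 4) ℝ :=
  !![0, 0, 1, 0;
     0, 0, 0, 1;
     1, 0, 0, 0;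
     0, 1, 0, 0]

/-!
Write `M ∈ O(4)` in `2 × 2` blocks `[[A, B], [C, D]]`. If `M` preserves `T₀`, then
`|Ax + By|² = 1/2` for all `x, y` on the circle `|·|² = 1/2`. Replacing `y` by `-y` kills the cross
term, so `AᵀB = 0`; then `|Ax|²` and `|By|²` are separately constant on the circle, so
`AᵀA = a • 1` and `BᵀB = (1 - a) • 1`. As the rows of `[A B]` are orthonormal,
`(AᵀA)² = Aᵀ(1 - BBᵀ)A = AᵀA`, hence `a ∈ {0, 1}`, and orthonormality of the columns of `M`
forces the other two blocks to vanish: `M` is block diagonal or block antidiagonal, with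
orthogonal blocks.
-/

open Set

namespace Matrix

section QuadraticForms

variable {n : Type*} [Fintype n] {r : ℝ}

lemma smul_dotProduct_mulVec_smul (S : Matrix n n ℝ) (c : ℝ) (u v : n → ℝ) :
    (c • u) ⬝ᵥ S *ᵥ (c • v) = c * c * (u ⬝ᵥ S *ᵥ v) := by
  simp only [mulVec_smul, smul_dotProduct, dotProduct_smul, smul_eq_mul]
  ring

lemma dotProduct_transpose_mul_mulVec {m : Type*} [Fintype m] (A B : Matrix m n ℝ)
    (x y : n → ℝ) : x ⬝ᵥ (Aᵀ * B) *ᵥ y = A *ᵥ x ⬝ᵥ B *ᵥ y := by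
  rw [← mulVec_mulVec, dotProduct_mulVec, vecMul_transpose]

lemma transpose_mul_self_eq_zero {m : Type*} {A : Matrix n m ℝ} :
    Aᵀ * A = 0 ↔ A = 0 := by
  simpa using conjTranspose_mul_self_eq_zero (A := A)

variable [DecidableEq n]

lemma sqrt_smul_single_dotProduct_self (hr : 0 ≤ r) (i : n) :
    (√r • Pi.single i 1 : n → ℝ) ⬝ᵥ (√r • Pi.single i 1) = r := by
  simp [dotProduct_smul, Real.mul_self_sqrt hr]

lemma eq_zero_of_dotProduct_mulVec_eq_zero (hr : 0 < r) {S : Matrix n n ℝ}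
    (h : ∀ x y, x ⬝ᵥ x = r → y ⬝ᵥ y = r → x ⬝ᵥ S *ᵥ y = 0) : S = 0 := by
  ext i j
  have hij := h _ _ (sqrt_smul_single_dotProduct_self hr.le i)
    (sqrt_smul_single_dotProduct_self hr.le j)
  rw [smul_dotProduct_mulVec_smul, Real.mul_self_sqrt hr.le] at hij
  simpa [hr.ne'] using hij

lemma eq_smul_one_of_dotProduct_mulVec_self_eq (hr : 0 < r) {S : Matrix n n ℝ} (hS : S.IsSymm)
    {k : ℝ} (h : ∀ x, x ⬝ᵥ x = r → x ⬝ᵥ S *ᵥ x = k) : S = (k / r) • 1 := by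
  have hdiag (i : n) : S i i = k / r := by
    have hi := h _ (sqrt_smul_single_dotProduct_self hr.le i)
    rw [smul_dotProduct_mulVec_smul, Real.mul_self_sqrt hr.le] at hi
    simpa [eq_div_iff hr.ne', mul_comm] using hi
  ext i j
  obtain rfl | hij := eq_or_ne i j
  · simp [hdiag]
  set x : n → ℝ := √(r / 2) • (Pi.single i 1 + Pi.single j 1)
  have hx : x ⬝ᵥ x = r := by
    rw [dotProduct_smul, smul_dotProduct, smul_smul, Real.mul_self_sqrt (half_pos hr).le]
    simp [dotProduct_add, hij, hij.symm]
    ring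
  have hSx := h x hx
  rw [smul_dotProduct_mulVec_smul, Real.mul_self_sqrt (half_pos hr).le] at hSx
  simp only [mulVec_add, dotProduct_add, add_dotProduct, mulVec_single_one, single_one_dotProduct,
    col_apply, hdiag, hS.apply] at hSx
  field_simp at hSx
  have hrS : r * S i j = 0 := by linarith
  simpa [hij, hr.ne'] using hrS

end QuadraticForms

section OrthogonalGroup

variable {m R : Type*} [Fintype m] [DecidableEq m] [CommRing R]

lemma transpose_mem_orthogonalGroup {P : Matrix m m R} (hP : P ∈ orthogonalGroup m R) :
    Pᵀ ∈ orthogonalGroup m R := by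
  rw [mem_orthogonalGroup_iff, transpose_transpose, ← mem_orthogonalGroup_iff']
  exact hP

lemma mulVec_dotProduct_mulVec_self {P : Matrix m m R} (hP : P ∈ orthogonalGroup m R)
    (x : m → R) : P *ᵥ x ⬝ᵥ P *ᵥ x = x ⬝ᵥ x := by
  rw [dotProduct_mulVec, ← mulVec_transpose, mulVec_mulVec,
    (mem_orthogonalGroup_iff' m R).mp hP, one_mulVec]

lemma image_mulVec_eq_of_mapsTo {N : Matrix m m R} (hN : N ∈ orthogonalGroup m R)
    {s : Set (m → R)} (h : MapsTo N.mulVec s s) (h' : MapsTo Nᵀ.mulVec s s) : N.mulVec '' s = s :=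
  h.image_subset.antisymm fun y hy =>
    ⟨Nᵀ *ᵥ y, h' hy, by rw [mulVec_mulVec, (mem_orthogonalGroup_iff m R).mp hN, one_mulVec]⟩

lemma fromBlocks_diagonal_mem_orthogonalGroup {P Q : Matrix m m R} (hP : P ∈ orthogonalGroup m R)
    (hQ : Q ∈ orthogonalGroup m R) : fromBlocks P 0 0 Q ∈ orthogonalGroup (m ⊕ m) R := by
  rw [mem_orthogonalGroup_iff] at hP hQ ⊢
  simp [fromBlocks_transpose, fromBlocks_multiply, hP, hQ]

lemma fromBlocks_antidiagonal_mem_orthogonalGroup {P Q : Matrix m m R}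
    (hP : P ∈ orthogonalGroup m R) (hQ : Q ∈ orthogonalGroup m R) :
    fromBlocks 0 Q P 0 ∈ orthogonalGroup (m ⊕ m) R := by
  rw [mem_orthogonalGroup_iff] at hP hQ ⊢
  simp [fromBlocks_transpose, fromBlocks_multiply, hP, hQ]

lemma reindex_mem_orthogonalGroup {n : Type*} [Fintype n] [DecidableEq n] (e : m ≃ n)
    {M : Matrix m m R} (hM : M ∈ orthogonalGroup m R) : reindex e e M ∈ orthogonalGroup n R := by
  rw [mem_orthogonalGroup_iff] at hM ⊢
  simp [reindex_apply, transpose_submatrix, hM]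

end OrthogonalGroup

section Rigidity

variable {n : Type*} [Fintype n] [DecidableEq n] {r : ℝ} {A B : Matrix n n ℝ}

lemma transpose_mul_eq_zero_of_forall_sphere (hr : 0 < r)
    (h : ∀ x y, x ⬝ᵥ x = r → y ⬝ᵥ y = r → (A *ᵥ x + B *ᵥ y) ⬝ᵥ (A *ᵥ x + B *ᵥ y) = r) :
    Aᵀ * B = 0 := by
  refine eq_zero_of_dotProduct_mulVec_eq_zero hr fun x y hx hy => ?_
  have hpos := h x y hx hy
  have hneg := h x (-y) hx (by simpa using hy)
  rw [mulVec_neg] at hneg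
  rw [dotProduct_transpose_mul_mulVec]
  simp only [dotProduct_add, add_dotProduct, dotProduct_neg, neg_dotProduct,
    dotProduct_comm (B *ᵥ y) (A *ᵥ x)] at hpos hneg
  linarith

lemma exists_transpose_mul_self_eq_smul_one_of_forall_sphere [Nonempty n] (hr : 0 < r)
    (h : ∀ x y, x ⬝ᵥ x = r → y ⬝ᵥ y = r → (A *ᵥ x + B *ᵥ y) ⬝ᵥ (A *ᵥ x + B *ᵥ y) = r) :
    ∃ a : ℝ, Aᵀ * A = a • 1 ∧ Bᵀ * B = (1 - a) • 1 := by
  have hAB := transpose_mul_eq_zero_of_forall_sphere hr h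
  have hsplit : ∀ x y, x ⬝ᵥ x = r → y ⬝ᵥ y = r →
      x ⬝ᵥ (Aᵀ * A) *ᵥ x + y ⬝ᵥ (Bᵀ * B) *ᵥ y = r := by
    intro x y hx hy
    have hxy := h x y hx hy
    have hcross : A *ᵥ x ⬝ᵥ B *ᵥ y = 0 := by
      rw [← dotProduct_transpose_mul_mulVec, hAB, zero_mulVec, dotProduct_zero]
    simp only [dotProduct_add, add_dotProduct, dotProduct_comm (B *ᵥ y) (A *ᵥ x), hcross] at hxy
    simp only [dotProduct_transpose_mul_mulVec]
    linarith
  obtain ⟨i⟩ := ‹Nonempty n›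
  set p : n → ℝ := √r • Pi.single i 1
  have hp : p ⬝ᵥ p = r := sqrt_smul_single_dotProduct_self hr.le i
  have hA := eq_smul_one_of_dotProduct_mulVec_self_eq hr (isSymm_transpose_mul_self A)
    (k := r - p ⬝ᵥ (Bᵀ * B) *ᵥ p) fun x hx => by linarith [hsplit x p hx hp]
  have hB := eq_smul_one_of_dotProduct_mulVec_self_eq hr (isSymm_transpose_mul_self B)
    (k := r - p ⬝ᵥ (Aᵀ * A) *ᵥ p) fun y hy => by linarith [hsplit p y hp hy]
  refine ⟨_, hA, hB.trans ?_⟩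
  have hpp := hsplit p p hp hp
  congr 1
  field_simp
  linarith

lemma eq_zero_or_eq_one_of_transpose_mul_self_eq_smul_one [Nonempty n] {a : ℝ}
    (hrow : A * Aᵀ + B * Bᵀ = 1) (hAB : Aᵀ * B = 0) (ha : Aᵀ * A = a • 1) : a = 0 ∨ a = 1 := by
  have hidem : (Aᵀ * A) * (Aᵀ * A) = Aᵀ * A := calc
    (Aᵀ * A) * (Aᵀ * A) = Aᵀ * (A * Aᵀ) * A := by simp only [Matrix.mul_assoc]
    _ = Aᵀ * (1 - B * Bᵀ) * A := by rw [← hrow, add_sub_cancel_right]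
    _ = Aᵀ * A - (Aᵀ * B) * (Aᵀ * B)ᵀ := by
      simp only [Matrix.mul_sub, Matrix.sub_mul, Matrix.mul_one, transpose_mul,
        transpose_transpose, Matrix.mul_assoc]
    _ = Aᵀ * A := by rw [hAB, Matrix.zero_mul, sub_zero]
  obtain ⟨i⟩ := ‹Nonempty n›
  have hii := congr_fun₂ hidem i i
  rw [ha, smul_mul_smul_comm, Matrix.one_mul] at hii
  exact IsIdempotentElem.iff_eq_zero_or_one.mp (by simpa using hii : a * a = a)

variable {C D : Matrix n n ℝ}

lemma fromBlocks_eq_diagonal_or_antidiagonal [Nonempty n] (hr : 0 < r)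
    (hN : fromBlocks A B C D ∈ orthogonalGroup (n ⊕ n) ℝ)
    (h : ∀ x y, x ⬝ᵥ x = r → y ⬝ᵥ y = r → (A *ᵥ x + B *ᵥ y) ⬝ᵥ (A *ᵥ x + B *ᵥ y) = r) :
    (B = 0 ∧ C = 0 ∧ A ∈ orthogonalGroup n ℝ ∧ D ∈ orthogonalGroup n ℝ) ∨
      (A = 0 ∧ D = 0 ∧ B ∈ orthogonalGroup n ℝ ∧ C ∈ orthogonalGroup n ℝ) := by
  have hrows := (mem_orthogonalGroup_iff _ ℝ).mp hN
  have hcols := (mem_orthogonalGroup_iff' _ ℝ).mp hN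
  rw [fromBlocks_transpose, fromBlocks_multiply, ← fromBlocks_one, fromBlocks_inj] at hrows hcols
  obtain ⟨hrow, -, -, -⟩ := hrows
  obtain ⟨hcolA, -, -, hcolD⟩ := hcols
  have hAB := transpose_mul_eq_zero_of_forall_sphere hr h
  obtain ⟨a, hA, hB⟩ := exists_transpose_mul_self_eq_smul_one_of_forall_sphere hr h
  rcases eq_zero_or_eq_one_of_transpose_mul_self_eq_smul_one hrow hAB hA with rfl | rfl
  · rw [zero_smul] at hA
    rw [sub_zero, one_smul] at hB
    refine .inr ⟨transpose_mul_self_eq_zero.mp hA,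
      transpose_mul_self_eq_zero.mp (by simpa [hB] using hcolD),
      (mem_orthogonalGroup_iff' _ ℝ).mpr hB,
      (mem_orthogonalGroup_iff' _ ℝ).mpr (by simpa [hA] using hcolA)⟩
  · rw [one_smul] at hA
    rw [sub_self, zero_smul] at hB
    refine .inl ⟨transpose_mul_self_eq_zero.mp hB,
      transpose_mul_self_eq_zero.mp (by simpa [hA] using hcolA),
      (mem_orthogonalGroup_iff' _ ℝ).mpr hA,
      (mem_orthogonalGroup_iff' _ ℝ).mpr (by simpa [hB] using hcolD)⟩

end Rigidity

end Matrix

section CliffordTorus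

variable {n : Type*} [Fintype n] {r : ℝ}

/-- `S × S` for the sphere `S = {x | x ⬝ᵥ x = r}` of squared radius `r`, with `ℝⁿ × ℝⁿ` encoded as
`n ⊕ n → ℝ` so that block matrices `Matrix.fromBlocks` act on it. -/
def cliffordTorus (n : Type*) [Fintype n] (r : ℝ) : Set (n ⊕ n → ℝ) :=
  {w | w ∘ Sum.inl ⬝ᵥ w ∘ Sum.inl = r ∧ w ∘ Sum.inr ⬝ᵥ w ∘ Sum.inr = r}

@[simp]
lemma sum_elim_mem_cliffordTorus {x y : n → ℝ} :
    Sum.elim x y ∈ cliffordTorus n r ↔ x ⬝ᵥ x = r ∧ y ⬝ᵥ y = r := by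
  simp [cliffordTorus]

variable [DecidableEq n]

lemma mapsTo_fromBlocks_diagonal {P Q : Matrix n n ℝ} (hP : P ∈ orthogonalGroup n ℝ)
    (hQ : Q ∈ orthogonalGroup n ℝ) :
    MapsTo (fromBlocks P 0 0 Q).mulVec (cliffordTorus n r) (cliffordTorus n r) := by
  rintro w ⟨hx, hy⟩
  simp [fromBlocks_mulVec, mulVec_dotProduct_mulVec_self hP, mulVec_dotProduct_mulVec_self hQ,
    hx, hy]

lemma mapsTo_fromBlocks_antidiagonal {P Q : Matrix n n ℝ} (hP : P ∈ orthogonalGroup n ℝ)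
    (hQ : Q ∈ orthogonalGroup n ℝ) :
    MapsTo (fromBlocks 0 Q P 0).mulVec (cliffordTorus n r) (cliffordTorus n r) := by
  rintro w ⟨hx, hy⟩
  simp [fromBlocks_mulVec, mulVec_dotProduct_mulVec_self hP, mulVec_dotProduct_mulVec_self hQ,
    hx, hy]

lemma image_fromBlocks_diagonal_cliffordTorus {P Q : Matrix n n ℝ} (hP : P ∈ orthogonalGroup n ℝ)
    (hQ : Q ∈ orthogonalGroup n ℝ) :
    (fromBlocks P 0 0 Q).mulVec '' cliffordTorus n r = cliffordTorus n r := by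
  refine image_mulVec_eq_of_mapsTo (fromBlocks_diagonal_mem_orthogonalGroup hP hQ)
    (mapsTo_fromBlocks_diagonal hP hQ) ?_
  simpa [fromBlocks_transpose] using
    mapsTo_fromBlocks_diagonal (transpose_mem_orthogonalGroup hP) (transpose_mem_orthogonalGroup hQ)

lemma image_fromBlocks_antidiagonal_cliffordTorus {P Q : Matrix n n ℝ}
    (hP : P ∈ orthogonalGroup n ℝ) (hQ : Q ∈ orthogonalGroup n ℝ) :
    (fromBlocks 0 Q P 0).mulVec '' cliffordTorus n r = cliffordTorus n r := by
  refine image_mulVec_eq_of_mapsTo (fromBlocks_antidiagonal_mem_orthogonalGroup hP hQ)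
    (mapsTo_fromBlocks_antidiagonal hP hQ) ?_
  simpa [fromBlocks_transpose] using
    mapsTo_fromBlocks_antidiagonal (transpose_mem_orthogonalGroup hQ)
      (transpose_mem_orthogonalGroup hP)

theorem image_mulVec_cliffordTorus_eq_iff [Nonempty n] (hr : 0 < r)
    {N : Matrix (n ⊕ n) (n ⊕ n) ℝ} (hN : N ∈ orthogonalGroup (n ⊕ n) ℝ) :
    N.mulVec '' cliffordTorus n r = cliffordTorus n r ↔
      (∃ P Q, P ∈ orthogonalGroup n ℝ ∧ Q ∈ orthogonalGroup n ℝ ∧ N = fromBlocks P 0 0 Q) ∨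
      (∃ P Q, P ∈ orthogonalGroup n ℝ ∧ Q ∈ orthogonalGroup n ℝ ∧ N = fromBlocks 0 Q P 0) := by
  refine ⟨fun himg => ?_, ?_⟩
  · obtain ⟨A, B, C, D, rfl⟩ : ∃ A B C D, N = fromBlocks A B C D :=
      ⟨_, _, _, _, (fromBlocks_toBlocks N).symm⟩
    have h : ∀ x y, x ⬝ᵥ x = r → y ⬝ᵥ y = r → (A *ᵥ x + B *ᵥ y) ⬝ᵥ (A *ᵥ x + B *ᵥ y) = r := by
      intro x y hx hy
      have hxy := himg.subset (mem_image_of_mem _ (sum_elim_mem_cliffordTorus.mpr ⟨hx, hy⟩))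
      rw [fromBlocks_mulVec] at hxy
      simpa using hxy.1
    rcases fromBlocks_eq_diagonal_or_antidiagonal hr hN h with
      ⟨rfl, rfl, hA, hD⟩ | ⟨rfl, rfl, hB, hC⟩
    exacts [.inl ⟨A, D, hA, hD, rfl⟩, .inr ⟨C, B, hC, hB, rfl⟩]
  · rintro (⟨P, Q, hP, hQ, rfl⟩ | ⟨P, Q, hP, hQ, rfl⟩)
    exacts [image_fromBlocks_diagonal_cliffordTorus hP hQ,
      image_fromBlocks_antidiagonal_cliffordTorus hP hQ]

end CliffordTorus

section FinFour

abbrev finFourEquivSum : Fin 4 ≃ Fin 2 ⊕ Fin 2 := (finSumFinEquiv (m := 2) (n := 2)).symm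

lemma comp_symm_mem_cliffordTorus_iff {v : Fin 4 → ℝ} :
    v ∘ finFourEquivSum.symm ∈ cliffordTorus (Fin 2) (1 / 2) ↔ v ∈ CliffordT0 := by
  simp only [cliffordTorus, CliffordT0, dotProduct, Fin.sum_univ_two, sq]
  exact Iff.rfl

lemma image_mulVec_cliffordT0_eq_iff (M : Matrix (Fin 4) (Fin 4) ℝ) :
    M.mulVec '' CliffordT0 = CliffordT0 ↔
      (reindex finFourEquivSum finFourEquivSum M).mulVec '' cliffordTorus (Fin 2) (1 / 2) =
        cliffordTorus (Fin 2) (1 / 2) := by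
  let φ : (Fin 4 → ℝ) → Fin 2 ⊕ Fin 2 → ℝ := (· ∘ finFourEquivSum.symm)
  have hφ : φ.Injective := finFourEquivSum.symm.surjective.injective_comp_right
  have hT : φ '' CliffordT0 = cliffordTorus (Fin 2) (1 / 2) := by
    ext w
    refine ⟨?_, fun hw => ⟨w ∘ finFourEquivSum, ?_, ?_⟩⟩
    · rintro ⟨v, hv, rfl⟩
      exact comp_symm_mem_cliffordTorus_iff.mpr hv
    · rw [← comp_symm_mem_cliffordTorus_iff]
      simpa [Function.comp_assoc] using hw
    · ext; simp [φ]
  have hM : (reindex finFourEquivSum finFourEquivSum M).mulVec ∘ φ = φ ∘ M.mulVec :=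
    funext fun v => by simp [φ, reindex_apply, submatrix_mulVec_equiv, Function.comp_assoc]
  rw [← hT, ← image_comp, hM, image_comp, (image_injective.mpr hφ).eq_iff]

lemma reindex_blockDiag2 (P Q : Matrix (Fin 2) (Fin 2) ℝ) :
    reindex finFourEquivSum finFourEquivSum (blockDiag2 P Q) = fromBlocks P 0 0 Q := by
  ext (i | i) (j | j) <;> fin_cases i <;> fin_cases j <;> rfl

lemma reindex_swapMat : reindex finFourEquivSum finFourEquivSum swapMat = fromBlocks 0 1 1 0 := by
  ext (i | i) (j | j) <;> fin_cases i <;> fin_cases j <;> rfl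

lemma reindex_swapMat_mul_blockDiag2 (P Q : Matrix (Fin 2) (Fin 2) ℝ) :
    reindex finFourEquivSum finFourEquivSum (swapMat * blockDiag2 P Q) = fromBlocks 0 Q P 0 := by
  have hmul : reindex finFourEquivSum finFourEquivSum (swapMat * blockDiag2 P Q) =
      reindex finFourEquivSum finFourEquivSum swapMat *
        reindex finFourEquivSum finFourEquivSum (blockDiag2 P Q) := by
    simp [reindex_apply]
  rw [hmul, reindex_swapMat, reindex_blockDiag2, fromBlocks_multiply]
  simp

lemma eq_blockDiag2_iff {M : Matrix (Fin 4) (Fin 4) ℝ} {P Q : Matrix (Fin 2) (Fin 2) ℝ} :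
    M = blockDiag2 P Q ↔ reindex finFourEquivSum finFourEquivSum M = fromBlocks P 0 0 Q := by
  rw [← reindex_blockDiag2, (reindex _ _).injective.eq_iff]

lemma eq_swapMat_mul_blockDiag2_iff {M : Matrix (Fin 4) (Fin 4) ℝ}
    {P Q : Matrix (Fin 2) (Fin 2) ℝ} :
    M = swapMat * blockDiag2 P Q ↔
      reindex finFourEquivSum finFourEquivSum M = fromBlocks 0 Q P 0 := by
  rw [← reindex_swapMat_mul_blockDiag2, (reindex _ _).injective.eq_iff]

end FinFour

theorem stabiliser_of_clifford_torus :
    (∀ M : Matrix (Fin 4) (Fin 4) ℝ, M ∈ Matrix.orthogonalGroup (Fin 4) ℝ →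
      ((M.mulVec '' CliffordT0 = CliffordT0) ↔
        (∃ P Q : Matrix (Fin 2) (Fin 2) ℝ, P ∈ Matrix.orthogonalGroup (Fin 2) ℝ ∧
            Q ∈ Matrix.orthogonalGroup (Fin 2) ℝ ∧ M = blockDiag2 P Q) ∨
        (∃ P Q : Matrix (Fin 2) (Fin 2) ℝ, P ∈ Matrix.orthogonalGroup (Fin 2) ℝ ∧
            Q ∈ Matrix.orthogonalGroup (Fin 2) ℝ ∧ M = swapMat * blockDiag2 P Q))) ∧
    (∀ P Q : Matrix (Fin 2) (Fin 2) ℝ, P ∈ Matrix.orthogonalGroup (Fin 2) ℝ →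
      Q ∈ Matrix.orthogonalGroup (Fin 2) ℝ →
      (blockDiag2 P Q).mulVec '' CliffordT0 = CliffordT0) := by
  refine ⟨fun M hM => ?_, fun P Q hP hQ => ?_⟩
  · simp only [image_mulVec_cliffordT0_eq_iff, eq_blockDiag2_iff, eq_swapMat_mul_blockDiag2_iff]
    exact image_mulVec_cliffordTorus_eq_iff one_half_pos (reindex_mem_orthogonalGroup _ hM)
  · rw [image_mulVec_cliffordT0_eq_iff, reindex_blockDiag2]
    exact image_fromBlocks_diagonal_cliffordTorus hP hQ
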